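/- arXiv:2510.12522 — 2 statements merged into one kernel-verified Lean document; each statement's English description precedes it below -/
import Mathlib

section
/- Let f, g : ℝⁿ_{≥0} → ℝⁿ_{≥0} be m-topical maps. Then for every J ⊆ {1,…,n} and every i ∈ {1,…,n}: f(g(e_J))_i > 0 if and only if f(e_I)_i > 0, where I = {j ∈ {1,…,n} : g(e_J)_j > 0}. In other words, the lower signature of f∘g equals the composition of the lower signature of f with the lower signature of g. -/
open Filter Set

/-- Vectors in ℝⁿ indexed by `Fin n`. -/
abbrev Vec (n : ℕ) := Fin n → ℝ

/-- Entrywise nonnegative vector: an element of ℝⁿ_{≥0}. -/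
def Nonneg {n : ℕ} (x : Vec n) : Prop := ∀ i, 0 ≤ x i

/-- Entrywise positive vector: an element of ℝⁿ_{>0}. -/
def Pos {n : ℕ} (x : Vec n) : Prop := ∀ i, 0 < x i

/-- An m-topical map: continuous on ℝⁿ_{≥0}, preserving ℝⁿ_{≥0}, order-preserving,
homogeneous of degree one, and mapping the interior ℝⁿ_{>0} into itself. -/
structure IsMTopical {n : ℕ} (f : Vec n → Vec n) : Prop where
  map_nonneg : ∀ x, Nonneg x → Nonneg (f x)
  contOn : ContinuousOn f {x : Vec n | Nonneg x}
  mono : ∀ x y, Nonneg x → Nonneg y → x ≤ y → f x ≤ f y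
  hom : ∀ c : ℝ, 0 < c → ∀ x, Nonneg x → f (c • x) = c • f x
  map_pos : ∀ x, Pos x → Pos (f x)

/-- The indicator vector `e_J` of a subset `J ⊆ [n]`. -/
noncomputable def eVec {n : ℕ} (J : Set (Fin n)) : Vec n := J.indicator fun _ => 1

/-- The all-ones vector `𝟙`. -/
def allOnes (n : ℕ) : Vec n := fun _ => 1

lemma eVec_nonneg {n : ℕ} (J : Set (Fin n)) : Nonneg (eVec J) := by
  intro k
  unfold eVec
  by_cases hk : k ∈ J
  · simp [Set.indicator_of_mem hk]
  · simp [Set.indicator_of_notMem hk]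

/-- The lower signature of a composition is the composition of the lower signatures. -/
theorem lowerSignature_comp {n : ℕ} (hn : 0 < n) (f g : Vec n → Vec n)
    (hf : IsMTopical f) (hg : IsMTopical g) :
    ∀ J : Set (Fin n), ∀ i : Fin n,
      0 < f (g (eVec J)) i ↔ 0 < f (eVec {j : Fin n | 0 < g (eVec J) j}) i := by
  intro J i
  set x : Vec n := g (eVec J) with hx
  have hxnn : Nonneg x := hg.map_nonneg _ (eVec_nonneg J)
  set I : Set (Fin n) := {j : Fin n | 0 < x j} with hI
  have hInn : Nonneg (eVec I) := eVec_nonneg I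
  by_cases hzero : ∀ j, x j = 0
  · have hIe : eVec I = x := by
      funext k
      have hk : k ∉ I := by simp [hI, hzero k]
      simp [eVec, Set.indicator_of_notMem hk, hzero k]
    rw [hIe]
  · push_neg at hzero
    obtain ⟨j₀, hj₀⟩ := hzero
    have hj₀pos : 0 < x j₀ := lt_of_le_of_ne (hxnn j₀) (Ne.symm hj₀)
    classical
    set S : Finset (Fin n) := Finset.univ.filter (fun j => 0 < x j) with hS
    have hSne : S.Nonempty := ⟨j₀, by simp [hS, hj₀pos]⟩
    set m : ℝ := S.inf' hSne x with hm
    set M : ℝ := S.sup' hSne x with hM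
    have hmpos : 0 < m := by
      rw [hm]
      apply (Finset.lt_inf'_iff hSne).2
      intro j hj
      exact (Finset.mem_filter.1 hj).2
    have hMpos : 0 < M :=
      lt_of_lt_of_le hj₀pos (Finset.le_sup' x (by simp [hS, hj₀pos]))
    -- m • eVec I ≤ x
    have hle1 : m • eVec I ≤ x := by
      intro k
      by_cases hk : k ∈ I
      · have : m ≤ x k := Finset.inf'_le x (by simp [hS]; exact hk)
        simpa [eVec, Set.indicator_of_mem hk] using this
      · simpa [eVec, Set.indicator_of_notMem hk] using hxnn k
    -- x ≤ M • eVec I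
    have hle2 : x ≤ M • eVec I := by
      intro k
      by_cases hk : k ∈ I
      · have : x k ≤ M := Finset.le_sup' x (by simp [hS]; exact hk)
        simpa [eVec, Set.indicator_of_mem hk] using this
      · have : x k = 0 := le_antisymm (not_lt.1 hk) (hxnn k)
        simp [eVec, Set.indicator_of_notMem hk, this]
    have hsm_nn : Nonneg (m • eVec I) := fun k => by
      have := hInn k
      simpa using mul_nonneg hmpos.le this
    have hsM_nn : Nonneg (M • eVec I) := fun k => by
      have := hInn k
      simpa using mul_nonneg hMpos.le this
    have h1 : m • f (eVec I) ≤ f x := by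
      rw [← hf.hom m hmpos _ hInn]
      exact hf.mono _ _ hsm_nn hxnn hle1
    have h2 : f x ≤ M • f (eVec I) := by
      rw [← hf.hom M hMpos _ hInn]
      exact hf.mono _ _ hxnn hsM_nn hle2
    constructor
    · intro hpos
      have := lt_of_lt_of_le hpos (h2 i)
      simp only [Pi.smul_apply, smul_eq_mul] at this
      have hynn : 0 ≤ f (eVec I) i := hf.map_nonneg _ hInn i
      nlinarith
    · intro hpos
      have : 0 < m * f (eVec I) i := mul_pos hmpos hpos
      exact lt_of_lt_of_le this (h1 i)
end

section
/- Let f : ℝⁿ_{≥0} → ℝⁿ_{≥0} be an m-topical map with an eigenvector u ∈ ℝⁿ_{>0} (so f(u) = λu for some λ > 0). Then u is the unique eigenvector of f in ℝⁿ_{>0} up to scaling (every v ∈ ℝⁿ_{>0} with f(v) = μv for some μ > 0 is a positive scalar multiple of u) if and only if f satisfies condition (N) at u. -/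
open Filter Set

/-- `f` satisfies condition (N) at `x`: for every pair of nonempty disjoint subsets
`I, J ⊂ [n]`, either there is `j ∈ J` with `f(x + t e_{Jᶜ})_j > f(x)_j` for all `t > 0`,
or there is `i ∈ I` with `f(x - t e_{Iᶜ})_i < f(x)_i` for all sufficiently small `t > 0`. -/
def CondN {n : ℕ} (f : Vec n → Vec n) (x : Vec n) : Prop :=
  ∀ I J : Set (Fin n), I.Nonempty → J.Nonempty → Disjoint I J →
    (∃ j ∈ J, ∀ t : ℝ, 0 < t → f x j < f (x + t • eVec Jᶜ) j) ∨
    (∃ i ∈ I, ∃ δ : ℝ, 0 < δ ∧ ∀ t : ℝ, 0 < t → t < δ → f (x - t • eVec Iᶜ) i < f x i)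

/- ------------------- auxiliary lemmas ------------------- -/

lemma eVec_apply {n : ℕ} (S : Set (Fin n)) (i : Fin n) [Decidable (i ∈ S)] :
    eVec S i = if i ∈ S then 1 else 0 := by
  simp [eVec, Set.indicator_apply]

lemma eVec_mem {n : ℕ} {S : Set (Fin n)} {i : Fin n} (h : i ∈ S) : eVec S i = 1 := by
  simp [eVec, Set.indicator_apply, h]

lemma eVec_notMem {n : ℕ} {S : Set (Fin n)} {i : Fin n} (h : i ∉ S) : eVec S i = 0 := by
  simp [eVec, Set.indicator_apply, h]

lemma eVec_nonneg_s14 {n : ℕ} (S : Set (Fin n)) (i : Fin n) : 0 ≤ eVec S i := by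
  classical
  rw [eVec_apply]; split <;> norm_num

lemma eVec_le_one {n : ℕ} (S : Set (Fin n)) (i : Fin n) : eVec S i ≤ 1 := by
  classical
  rw [eVec_apply]; split <;> norm_num

lemma exists_pos_forall_le {n : ℕ} (hn : 0 < n) (g : Fin n → ℝ) (hg : ∀ i, 0 < g i) :
    ∃ t, 0 < t ∧ ∀ i, t ≤ g i := by
  haveI : Nonempty (Fin n) := ⟨⟨0, hn⟩⟩
  refine ⟨Finset.univ.inf' Finset.univ_nonempty g, ?_, fun i => Finset.inf'_le _ (Finset.mem_univ i)⟩
  exact (Finset.lt_inf'_iff _).mpr fun i _ => hg i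

lemma exists_forall_le {n : ℕ} (hn : 0 < n) (g : Fin n → ℝ) :
    ∃ M, ∀ i, g i ≤ M := by
  haveI : Nonempty (Fin n) := ⟨⟨0, hn⟩⟩
  exact ⟨Finset.univ.sup' Finset.univ_nonempty g, fun i => Finset.le_sup' _ (Finset.mem_univ i)⟩

/- ------------------- direction: CondN → uniqueness ------------------- -/

lemma unique_of_condN {n : ℕ} (hn : 0 < n) (f : Vec n → Vec n)
    (hf : IsMTopical f) (u : Vec n) (hu : Pos u) (lam : ℝ) (hlam : 0 < lam)
    (heig : f u = lam • u) (hN : CondN f u) :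
    ∀ v : Vec n, Pos v → ∀ mu : ℝ, 0 < mu → f v = mu • v →
        ∃ c : ℝ, 0 < c ∧ v = c • u := by
  classical
  haveI : Nonempty (Fin n) := ⟨⟨0, hn⟩⟩
  intro v hv mu hmu heigv
  have hune : (Finset.univ : Finset (Fin n)).Nonempty := Finset.univ_nonempty
  set r : Fin n → ℝ := fun i => v i / u i with hr
  set β : ℝ := Finset.univ.inf' hune r with hβ
  set α : ℝ := Finset.univ.sup' hune r with hα
  obtain ⟨j₀, -, hj₀'⟩ := Finset.exists_mem_eq_inf' hune r
  obtain ⟨i₀, -, hi₀'⟩ := Finset.exists_mem_eq_sup' hune r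
  have hj₀ : β = r j₀ := hβ.trans hj₀'
  have hi₀ : α = r i₀ := hα.trans hi₀'
  have hrpos : ∀ i, 0 < r i := fun i => div_pos (hv i) (hu i)
  have hβpos : 0 < β := hj₀ ▸ hrpos j₀
  have hαpos : 0 < α := hi₀ ▸ hrpos i₀
  have hβle : ∀ i, β * u i ≤ v i := by
    intro i
    have : β ≤ r i := Finset.inf'_le _ (Finset.mem_univ i)
    calc β * u i ≤ r i * u i := by nlinarith [hu i]
    _ = v i := div_mul_cancel₀ _ (ne_of_gt (hu i))
  have hαle : ∀ i, v i ≤ α * u i := by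
    intro i
    have : r i ≤ α := Finset.le_sup' _ (Finset.mem_univ i)
    calc v i = r i * u i := (div_mul_cancel₀ _ (ne_of_gt (hu i))).symm
    _ ≤ α * u i := by nlinarith [hu i]
  have hvj₀ : v j₀ = β * u j₀ := by
    rw [hj₀]; exact (div_mul_cancel₀ _ (ne_of_gt (hu j₀))).symm
  have hvi₀ : v i₀ = α * u i₀ := by
    rw [hi₀]; exact (div_mul_cancel₀ _ (ne_of_gt (hu i₀))).symm
  have hβα : β ≤ α := by
    rw [hj₀]; exact Finset.le_sup' _ (Finset.mem_univ j₀)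
  have hunn : Nonneg u := fun i => le_of_lt (hu i)
  have hvnn : Nonneg v := fun i => le_of_lt (hv i)
  -- mu = lam
  have hmulam : mu = lam := by
    have h1 : f (β • u) ≤ f v := by
      refine hf.mono _ _ (fun i => ?_) hvnn (fun i => ?_)
      · simp only [Pi.smul_apply, smul_eq_mul]; exact le_of_lt (mul_pos hβpos (hu i))
      · simp only [Pi.smul_apply, smul_eq_mul]; exact hβle i
    have h1' := h1 j₀
    rw [hf.hom β hβpos u hunn, heig, heigv] at h1'
    simp only [Pi.smul_apply, smul_eq_mul] at h1'
    -- h1' : β * (lam * u j₀) ≤ mu * v j₀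
    rw [hvj₀] at h1'
    have hle1 : lam ≤ mu := by nlinarith [mul_pos hβpos (hu j₀)]
    have h2 : f v ≤ f (α • u) := by
      refine hf.mono _ _ hvnn (fun i => ?_) (fun i => ?_)
      · simp only [Pi.smul_apply, smul_eq_mul]; exact le_of_lt (mul_pos hαpos (hu i))
      · simp only [Pi.smul_apply, smul_eq_mul]; exact hαle i
    have h2' := h2 i₀
    rw [hf.hom α hαpos u hunn, heig, heigv] at h2'
    simp only [Pi.smul_apply, smul_eq_mul] at h2'
    rw [hvi₀] at h2'
    have hle2 : mu ≤ lam := by nlinarith [mul_pos hαpos (hu i₀)]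
    linarith
  by_cases hab : α = β
  · refine ⟨β, hβpos, funext fun i => ?_⟩
    have := hαle i
    rw [hab] at this
    have := hβle i
    simp only [Pi.smul_apply, smul_eq_mul]
    linarith [hαle i, hβle i, hab ▸ hαle i]
  · -- α ≠ β, derive a contradiction from CondN
    exfalso
    have hβltα : β < α := lt_of_le_of_ne hβα (Ne.symm hab)
    set I₀ : Set (Fin n) := {i | v i = α * u i} with hI₀
    set J₀ : Set (Fin n) := {j | v j = β * u j} with hJ₀
    have hI₀ne : I₀.Nonempty := ⟨i₀, hvi₀⟩
    have hJ₀ne : J₀.Nonempty := ⟨j₀, hvj₀⟩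
    have hdisj : Disjoint I₀ J₀ := by
      rw [Set.disjoint_left]
      intro i hiI hiJ
      have h1 : v i = α * u i := hiI
      have h2 : v i = β * u i := hiJ
      have : α = β := by
        have := hu i; nlinarith
      exact hab this
    rcases hN I₀ J₀ hI₀ne hJ₀ne hdisj with ⟨j, hjJ, hj⟩ | ⟨i, hiI, δ, hδ, hi⟩
    · -- first alternative: contradiction via w = β⁻¹ • v
      set w : Vec n := β⁻¹ • v with hw
      have hwge : ∀ i, u i ≤ w i := by
        intro i
        simp only [hw, Pi.smul_apply, smul_eq_mul]
        calc u i = β⁻¹ * (β * u i) := by rw [inv_mul_cancel_left₀ (ne_of_gt hβpos)]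
        _ ≤ β⁻¹ * v i := by
            exact mul_le_mul_of_nonneg_left (hβle i) (le_of_lt (inv_pos.mpr hβpos))
      have hwgt : ∀ i, i ∉ J₀ → u i < w i := by
        intro i hiJ
        have hne : v i ≠ β * u i := hiJ
        have hlt : β * u i < v i := lt_of_le_of_ne (hβle i) (Ne.symm hne)
        simp only [hw, Pi.smul_apply, smul_eq_mul]
        calc u i = β⁻¹ * (β * u i) := by rw [inv_mul_cancel_left₀ (ne_of_gt hβpos)]
        _ < β⁻¹ * v i := by exact mul_lt_mul_of_pos_left hlt (inv_pos.mpr hβpos)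
      obtain ⟨t, htpos, htle⟩ := exists_pos_forall_le hn
        (fun i => if i ∈ J₀ then 1 else w i - u i)
        (by intro i; by_cases h : i ∈ J₀ <;> simp [h] <;> linarith [hwgt i (by simpa using h)])
      have hkey : u + t • eVec J₀ᶜ ≤ w := by
        intro i
        simp only [Pi.add_apply, Pi.smul_apply, smul_eq_mul]
        by_cases h : i ∈ J₀
        · rw [eVec_notMem (by simpa using h)]
          simpa using hwge i
        · rw [eVec_mem (by simpa using h)]
          have := htle i
          simp only [h, if_false] at this
          linarith
      have hxnn : Nonneg (u + t • eVec J₀ᶜ) := by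
        intro i
        simp only [Pi.add_apply, Pi.smul_apply, smul_eq_mul]
        have := eVec_nonneg_s14 J₀ᶜ i
        nlinarith [hunn i]
      have hwnn : Nonneg w := by
        intro i; exact le_trans (hunn i) (hwge i)
      have hmono := hf.mono _ _ hxnn hwnn hkey j
      have hfw : f w = lam • w := by
        rw [hw, hf.hom _ (by positivity) v hvnn, heigv, hmulam, smul_comm]
      have hwj : w j = u j := by
        have hj' : v j = β * u j := hjJ
        simp only [hw, Pi.smul_apply, smul_eq_mul, hj']
        field_simp
      rw [hfw] at hmono
      simp only [Pi.smul_apply, smul_eq_mul, hwj] at hmono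
      have hfuj : f u j = lam * u j := by rw [heig]; simp
      have := hj t htpos
      rw [hfuj] at this
      linarith
    · -- second alternative: contradiction via w' = α⁻¹ • v
      set w : Vec n := α⁻¹ • v with hw
      have hwle : ∀ i, w i ≤ u i := by
        intro i
        simp only [hw, Pi.smul_apply, smul_eq_mul]
        calc α⁻¹ * v i ≤ α⁻¹ * (α * u i) :=
              mul_le_mul_of_nonneg_left (hαle i) (le_of_lt (inv_pos.mpr hαpos))
        _ = u i := by rw [inv_mul_cancel_left₀ (ne_of_gt hαpos)]
      have hwlt : ∀ i, i ∉ I₀ → w i < u i := by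
        intro i hiI
        have hne : v i ≠ α * u i := hiI
        have hlt : v i < α * u i := lt_of_le_of_ne (hαle i) hne
        simp only [hw, Pi.smul_apply, smul_eq_mul]
        calc α⁻¹ * v i < α⁻¹ * (α * u i) := mul_lt_mul_of_pos_left hlt (inv_pos.mpr hαpos)
        _ = u i := by rw [inv_mul_cancel_left₀ (ne_of_gt hαpos)]
      obtain ⟨t, htpos, htle⟩ := exists_pos_forall_le hn
        (fun i => if i ∈ I₀ then δ/2 else min (δ/2) (u i - w i))
        (by
          intro i; by_cases h : i ∈ I₀ <;> simp [h]
          · linarith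
          · exact ⟨by linarith, by linarith [hwlt i (by simpa using h)]⟩)
      have htδ2 : t ≤ δ / 2 := by
        have h := htle i
        simp only [hiI, if_pos] at h
        simpa [Set.mem_setOf_eq] using h
      have htδ : t < δ := by linarith
      have hkey : w ≤ u - t • eVec I₀ᶜ := by
        intro k
        simp only [Pi.sub_apply, Pi.smul_apply, smul_eq_mul]
        by_cases h : k ∈ I₀
        · rw [eVec_notMem (by simpa using h)]
          simpa using hwle k
        · rw [eVec_mem (by simpa using h)]
          have hk := htle k
          simp only [h, if_neg, not_false_iff] at hk
          have := le_trans hk (min_le_right _ _)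
          linarith
      have hwnn : Nonneg w := by
        intro k
        simp only [hw, Pi.smul_apply, smul_eq_mul]
        exact le_of_lt (mul_pos (inv_pos.mpr hαpos) (hv k))
      have hxnn : Nonneg (u - t • eVec I₀ᶜ) := fun k => le_trans (hwnn k) (hkey k)
      have hmono := hf.mono _ _ hwnn hxnn hkey i
      have hfw : f w = lam • w := by
        rw [hw, hf.hom _ (by positivity) v hvnn, heigv, hmulam, smul_comm]
      have hwi : w i = u i := by
        have hi' : v i = α * u i := hiI
        simp only [hw, Pi.smul_apply, smul_eq_mul, hi']
        field_simp
      rw [hfw] at hmono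
      simp only [Pi.smul_apply, smul_eq_mul, hwi] at hmono
      have hfui : f u i = lam * u i := by rw [heig]; simp
      have := hi t htpos htδ
      rw [hfui] at this
      linarith

/- ------------------- direction: uniqueness → CondN ------------------- -/

set_option maxHeartbeats 2000000 in
lemma condN_of_unique {n : ℕ} (hn : 0 < n) (f : Vec n → Vec n)
    (hf : IsMTopical f) (u : Vec n) (hu : Pos u) (lam : ℝ) (hlam : 0 < lam)
    (heig : f u = lam • u)
    (H : ∀ v : Vec n, Pos v → ∀ mu : ℝ, 0 < mu → f v = mu • v →
        ∃ c : ℝ, 0 < c ∧ v = c • u) : CondN f u := by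
  classical
  haveI : Nonempty (Fin n) := ⟨⟨0, hn⟩⟩
  intro I J hI hJ hIJ
  by_contra hcon
  push_neg at hcon
  obtain ⟨hcJ, hcI⟩ := hcon
  have hunn : Nonneg u := fun i => le_of_lt (hu i)
  obtain ⟨m, hm, hmle⟩ := exists_pos_forall_le hn u hu
  obtain ⟨M, hMle⟩ := exists_forall_le hn u
  have hM : 0 < M := lt_of_lt_of_le (hu ⟨0, hn⟩) (hMle _)
  -- uniform tstar for the J direction
  have hT : ∀ j : Fin n, ∃ tj : ℝ, 0 < tj ∧ (j ∈ J → f (u + tj • eVec Jᶜ) j ≤ f u j) := by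
    intro j; by_cases h : j ∈ J
    · obtain ⟨t, ht, hle⟩ := hcJ j h; exact ⟨t, ht, fun _ => hle⟩
    · exact ⟨1, one_pos, fun h' => absurd h' h⟩
  choose T hT1 hT2 using hT
  obtain ⟨tstar, hts, htsle⟩ := exists_pos_forall_le hn T hT1
  have hnnJ : ∀ a : ℝ, 0 < a → Nonneg (u + a • eVec Jᶜ) := by
    intro a ha i
    simp only [Pi.add_apply, Pi.smul_apply, smul_eq_mul]
    have := eVec_nonneg_s14 Jᶜ i
    nlinarith [hunn i]
  have hJeq : ∀ j ∈ J, f (u + tstar • eVec Jᶜ) j = f u j := by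
    intro j hj
    refine le_antisymm ?_ ?_
    · refine le_trans (hf.mono (u + tstar • eVec Jᶜ) (u + T j • eVec Jᶜ)
        (hnnJ _ hts) (hnnJ _ (hT1 j)) (fun i => ?_) j) (hT2 j hj)
      simp only [Pi.add_apply, Pi.smul_apply, smul_eq_mul]
      have := eVec_nonneg_s14 Jᶜ i
      nlinarith [htsle j]
    · refine hf.mono _ _ hunn (hnnJ _ hts) (fun i => ?_) j
      simp only [Pi.add_apply, Pi.smul_apply, smul_eq_mul]
      have := eVec_nonneg_s14 Jᶜ i
      nlinarith
  -- uniform s for the I direction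
  have hS : ∀ i : Fin n, ∃ si : ℝ, 0 < si ∧ si ≤ m / 2 ∧
      (i ∈ I → f u i ≤ f (u - si • eVec Iᶜ) i) := by
    intro i; by_cases h : i ∈ I
    · obtain ⟨t, ht, htm, hle⟩ := hcI i h (m / 2) (by linarith)
      exact ⟨t, ht, le_of_lt htm, fun _ => hle⟩
    · exact ⟨m / 2, by linarith, le_refl _, fun h' => absurd h' h⟩
  choose S hS1 hS2 hS3 using hS
  obtain ⟨s, hs, hsle⟩ := exists_pos_forall_le hn S hS1
  have hsm : s ≤ m / 2 := le_trans (hsle (Classical.arbitrary _)) (hS2 _)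
  have hnnI : ∀ a : ℝ, 0 ≤ a → a ≤ m / 2 → Nonneg (u - a • eVec Iᶜ) := by
    intro a ha ham i
    simp only [Pi.sub_apply, Pi.smul_apply, smul_eq_mul]
    have h1 := eVec_le_one Iᶜ i
    have h2 := eVec_nonneg_s14 Iᶜ i
    nlinarith [hmle i]
  have hIeq : ∀ i ∈ I, f (u - s • eVec Iᶜ) i = f u i := by
    intro i hi
    refine le_antisymm ?_ ?_
    · refine hf.mono _ _ (hnnI _ (le_of_lt hs) hsm) hunn (fun k => ?_) i
      simp only [Pi.sub_apply, Pi.smul_apply, smul_eq_mul]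
      have := eVec_nonneg_s14 Iᶜ k
      nlinarith
    · refine le_trans (hS3 i hi) (hf.mono _ _ (hnnI _ (le_of_lt (hS1 i)) (hS2 i))
        (hnnI _ (le_of_lt hs) hsm) (fun k => ?_) i)
      simp only [Pi.sub_apply, Pi.smul_apply, smul_eq_mul]
      have := eVec_nonneg_s14 Iᶜ k
      nlinarith [hsle i]
  -- parameters
  set t : ℝ := tstar / M with htdef
  have ht : 0 < t := div_pos hts hM
  set t' : ℝ := min t (s / M) with ht'def
  have ht' : 0 < t' := lt_min ht (div_pos hs hM)
  have ht'1 : t' ≤ t := min_le_left _ _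
  have ht'2 : t' * M ≤ s := by
    have : t' ≤ s / M := min_le_right _ _
    calc t' * M ≤ (s / M) * M := by nlinarith
    _ = s := div_mul_cancel₀ _ (ne_of_gt hM)
  set D : Vec n := fun i => if i ∈ J then u i else (1 + t) * u i with hD
  have hDj : ∀ j ∈ J, D j = u j := fun j hj => by simp [hD, hj]
  have huD : u ≤ D := by
    intro i
    simp only [hD]
    split
    · exact le_refl _
    · nlinarith [hu i, ht]
  have hDnn : Nonneg D := fun i => le_trans (hunn i) (huD i)
  -- F5 : f D ≤ lam • D
  have hFD : ∀ i, f D i ≤ lam * D i := by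
    intro i
    by_cases hiJ : i ∈ J
    · have hle : D ≤ u + tstar • eVec Jᶜ := by
        intro k
        simp only [hD, Pi.add_apply, Pi.smul_apply, smul_eq_mul]
        by_cases h : k ∈ J
        · simp [h, eVec_notMem (show k ∉ Jᶜ by simpa using h)]
        · rw [if_neg h, eVec_mem (show k ∈ Jᶜ by simpa using h)]
          have h1 : t * u k ≤ t * M := by nlinarith [hMle k]
          have h2 : t * M = tstar := div_mul_cancel₀ _ (ne_of_gt hM)
          nlinarith [hu k]
      have h3 := hf.mono _ _ hDnn (hnnJ _ hts) hle i
      rw [hJeq i hiJ, heig] at h3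
      simp only [Pi.smul_apply, smul_eq_mul] at h3
      rw [hDj i hiJ]
      exact h3
    · have hle : D ≤ (1 + t) • u := by
        intro k
        simp only [hD, Pi.smul_apply, smul_eq_mul]
        split
        · nlinarith [hu k, ht]
        · exact le_refl _
      have h3 := hf.mono _ _ hDnn (fun k => by
        simp only [Pi.smul_apply, smul_eq_mul]; nlinarith [hunn k, ht]) hle i
      rw [hf.hom (1 + t) (by linarith) u hunn, heig] at h3
      simp only [Pi.smul_apply, smul_eq_mul] at h3
      have : D i = (1 + t) * u i := by simp [hD, hiJ]
      rw [this]
      nlinarith [h3]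
  -- F6
  have hF6 : ∀ x : Vec n, u ≤ x → (∀ i ∈ I, (1 + t') * u i ≤ x i) →
      ∀ i ∈ I, (1 + t') * (lam * u i) ≤ f x i := by
    intro x hx hxI i hi
    have hxnn : Nonneg x := fun k => le_trans (hunn k) (hx k)
    have hcomp : (1 + t') • (u - s • eVec Iᶜ) ≤ x := by
      intro k
      simp only [Pi.smul_apply, Pi.sub_apply, smul_eq_mul]
      by_cases h : k ∈ I
      · rw [eVec_notMem (show k ∉ Iᶜ by simpa using h)]
        have := hxI k h
        nlinarith
      · rw [eVec_mem (show k ∈ Iᶜ by simpa using h)]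
        have h1 : t' * u k ≤ t' * M := by nlinarith [hMle k]
        have h2 := hx k
        nlinarith [hs]
    have hnns := hnnI s (le_of_lt hs) hsm
    have h3 := hf.mono _ _ (fun k => by
      simp only [Pi.smul_apply, smul_eq_mul]
      exact mul_nonneg (by linarith) (hnns k)) hxnn hcomp i
    rw [hf.hom (1 + t') (by linarith) _ hnns] at h3
    simp only [Pi.smul_apply, smul_eq_mul] at h3
    rw [hIeq i hi] at h3
    have hfui : f u i = lam * u i := by rw [heig]; simp
    rw [hfui] at h3
    exact h3
  have hF7 : ∀ i ∈ I, (1 + t') * u i ≤ D i := by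
    intro i hi
    have hiJ : i ∉ J := Set.disjoint_left.mp hIJ hi
    simp only [hD, if_neg hiJ]
    nlinarith [hu i, ht'1]
  -- the iteration
  set g : Vec n → Vec n := fun y => lam⁻¹ • f y with hg
  set x : ℕ → Vec n := fun k => g^[k] D with hx
  have hx0 : x 0 = D := rfl
  have hxsucc : ∀ k, x (k + 1) = lam⁻¹ • f (x k) := fun k => Function.iterate_succ_apply' g k D
  have hinv : ∀ k, u ≤ x k ∧ x k ≤ D ∧ ∀ i ∈ I, (1 + t') * u i ≤ x k i := by
    intro k
    induction k with
    | zero => exact ⟨huD, le_refl D, hF7⟩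
    | succ k ih =>
      obtain ⟨h1, h2, h3⟩ := ih
      have hxknn : Nonneg (x k) := fun i => le_trans (hunn i) (h1 i)
      refine ⟨?_, ?_, ?_⟩
      · rw [hxsucc]
        intro i
        have hh := hf.mono u (x k) hunn hxknn h1 i
        rw [heig] at hh
        simp only [Pi.smul_apply, smul_eq_mul] at hh ⊢
        calc u i = lam⁻¹ * (lam * u i) := by rw [inv_mul_cancel_left₀ (ne_of_gt hlam)]
        _ ≤ lam⁻¹ * f (x k) i := by
            exact mul_le_mul_of_nonneg_left hh (le_of_lt (inv_pos.mpr hlam))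
      · rw [hxsucc]
        intro i
        have hh := hf.mono (x k) D hxknn hDnn h2 i
        simp only [Pi.smul_apply, smul_eq_mul]
        calc lam⁻¹ * f (x k) i ≤ lam⁻¹ * (lam * D i) := by
              exact mul_le_mul_of_nonneg_left (le_trans hh (hFD i)) (le_of_lt (inv_pos.mpr hlam))
        _ = D i := by rw [inv_mul_cancel_left₀ (ne_of_gt hlam)]
      · intro i hi
        rw [hxsucc]
        have hh := hF6 (x k) h1 h3 i hi
        simp only [Pi.smul_apply, smul_eq_mul]
        calc (1 + t') * u i = lam⁻¹ * ((1 + t') * (lam * u i)) := by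
              field_simp
        _ ≤ lam⁻¹ * f (x k) i := by
              exact mul_le_mul_of_nonneg_left hh (le_of_lt (inv_pos.mpr hlam))
  have hdec : ∀ k, x (k + 1) ≤ x k := by
    intro k
    induction k with
    | zero =>
      rw [hxsucc, hx0]
      intro i
      simp only [Pi.smul_apply, smul_eq_mul]
      calc lam⁻¹ * f D i ≤ lam⁻¹ * (lam * D i) :=
            mul_le_mul_of_nonneg_left (hFD i) (le_of_lt (inv_pos.mpr hlam))
      _ = D i := by rw [inv_mul_cancel_left₀ (ne_of_gt hlam)]
    | succ k ih =>
      rw [hxsucc (k + 1)]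
      intro i
      simp only [Pi.smul_apply, smul_eq_mul]
      have h1 : Nonneg (x (k + 1)) := fun i => le_trans (hunn i) ((hinv (k + 1)).1 i)
      have h2 : Nonneg (x k) := fun i => le_trans (hunn i) ((hinv k).1 i)
      have hfx : lam • x (k + 1) = f (x k) := by
        rw [hxsucc k, smul_inv_smul₀ (ne_of_gt hlam)]
      calc lam⁻¹ * f (x (k + 1)) i ≤ lam⁻¹ * f (x k) i :=
            mul_le_mul_of_nonneg_left (hf.mono _ _ h1 h2 ih i) (le_of_lt (inv_pos.mpr hlam))
      _ = lam⁻¹ * (lam * x (k + 1) i) := by rw [← hfx]; simp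
      _ = x (k + 1) i := by rw [inv_mul_cancel_left₀ (ne_of_gt hlam)]
  have hanti : ∀ i, Antitone fun k => x k i :=
    fun i => antitone_nat_of_succ_le fun k => hdec k i
  set vlim : Vec n := fun i => ⨅ k, x k i with hvlim
  have hbdd : ∀ i, BddBelow (Set.range fun k => x k i) := by
    intro i
    exact ⟨u i, by rintro y ⟨k, rfl⟩; exact (hinv k).1 i⟩
  have htend : ∀ i, Tendsto (fun k => x k i) atTop (nhds (vlim i)) :=
    fun i => tendsto_atTop_ciInf (hanti i) (hbdd i)
  have hvle : ∀ i, u i ≤ vlim i := fun i => le_ciInf fun k => (hinv k).1 i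
  have hvD : ∀ i, vlim i ≤ D i := fun i => ciInf_le (hbdd i) 0
  have hvI : ∀ i ∈ I, (1 + t') * u i ≤ vlim i :=
    fun i hi => le_ciInf fun k => (hinv k).2.2 i hi
  have hvpos : Pos vlim := fun i => lt_of_lt_of_le (hu i) (hvle i)
  have hvnn : Nonneg vlim := fun i => le_of_lt (hvpos i)
  have hxt : Tendsto x atTop (nhds vlim) := tendsto_pi_nhds.mpr htend
  have hxtS : Tendsto x atTop (nhdsWithin vlim {y : Vec n | Nonneg y}) :=
    tendsto_nhdsWithin_iff.mpr ⟨hxt, Eventually.of_forall fun k =>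
      (fun i => le_trans (hunn i) ((hinv k).1 i) : Nonneg (x k))⟩
  have hfc : Tendsto (fun k => f (x k)) atTop (nhds (f vlim)) :=
    (hf.contOn vlim hvnn).tendsto.comp hxtS
  have hfc2 : Tendsto (fun k => f (x k)) atTop (nhds (lam • vlim)) := by
    have h1 : (fun k => f (x k)) = fun k => lam • x (k + 1) := by
      funext k
      rw [hxsucc, smul_inv_smul₀ (ne_of_gt hlam)]
    rw [h1]
    exact (hxt.comp (tendsto_add_atTop_nat 1)).const_smul lam
  have heq : f vlim = lam • vlim := tendsto_nhds_unique hfc hfc2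
  obtain ⟨c, hc, hveq⟩ := H vlim hvpos lam hlam heq
  obtain ⟨j, hj⟩ := hJ
  obtain ⟨i, hi⟩ := hI
  have hvj : vlim j = u j := by
    refine le_antisymm ?_ (hvle j)
    have := hvD j
    rwa [hDj j hj] at this
  have hc1 : c = 1 := by
    have h1 := congrFun hveq j
    simp only [Pi.smul_apply, smul_eq_mul] at h1
    rw [hvj] at h1
    have := hu j
    nlinarith
  have h2 := congrFun hveq i
  simp only [Pi.smul_apply, smul_eq_mul, hc1, one_mul] at h2
  have h3 := hvI i hi
  rw [h2] at h3
  nlinarith [hu i, ht']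

/-- A positive eigenvector `u` of an m-topical map is unique up to scaling if and only if
the map satisfies condition (N) at `u`. -/
theorem condN_iff_unique_eigenvector {n : ℕ} (hn : 0 < n) (f : Vec n → Vec n)
    (hf : IsMTopical f) (u : Vec n) (hu : Pos u) (lam : ℝ) (hlam : 0 < lam)
    (heig : f u = lam • u) :
    (∀ v : Vec n, Pos v → ∀ mu : ℝ, 0 < mu → f v = mu • v →
        ∃ c : ℝ, 0 < c ∧ v = c • u) ↔ CondN f u :=
  ⟨condN_of_unique hn f hf u hu lam hlam heig,
   unique_of_condN hn f hf u hu lam hlam heig⟩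
end
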